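/- Let k be a positive integer with k ≡ 0 (mod 4), and let s ∈ ℂ satisfy s ≠ k + n for every natural number n and s ≠ k − 1. Then (2π)^{−s} · Γ(s) · ζ(s) · ζ(s−k+1) = 2 · (2π)^{−k} · cos(πs/2) · Γ(s) · Γ(k−s) · ζ(s) · ζ(k−s). -/
import Mathlib

open Complex

/-- Functional-equation identity for the completed `L`-function of the weight-`k`
Eisenstein series: for `k ≡ 0 (mod 4)` and `s` avoiding the poles of `Γ(k−s)` and `ζ(k−s)`,
`(2π)^(−s) Γ(s) ζ(s) ζ(s−k+1) = 2 (2π)^(−k) cos(πs/2) Γ(s) Γ(k−s) ζ(s) ζ(k−s)`. -/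
theorem completedEisensteinL_eq_cos_Gamma_zeta
    (k : ℕ) (hk4 : k % 4 = 0) (hk : 0 < k) (s : ℂ)
    (hpole : ∀ n : ℕ, s ≠ (k : ℂ) + (n : ℂ)) (hkone : s ≠ (k : ℂ) - 1) :
    (2 * Real.pi : ℂ) ^ (-s) * Complex.Gamma s * riemannZeta s * riemannZeta (s - k + 1) =
      2 * (2 * Real.pi : ℂ) ^ (-(k : ℂ)) * Complex.cos (Real.pi * s / 2) *
        Complex.Gamma s * Complex.Gamma ((k : ℂ) - s) *
        riemannZeta s * riemannZeta ((k : ℂ) - s) := by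
  obtain ⟨m, hm⟩ := Nat.dvd_of_mod_eq_zero hk4
  have h1 : ∀ n : ℕ, (k : ℂ) - s ≠ -n := fun n h => hpole n (by linear_combination -h)
  have h2 : (k : ℂ) - s ≠ 1 := fun h => hkone (by linear_combination -h)
  have hz := riemannZeta_one_sub h1 h2
  have he : (1 : ℂ) - ((k : ℂ) - s) = s - k + 1 := by ring
  rw [he] at hz
  rw [hz]
  have hcos : Complex.cos ((Real.pi : ℂ) * ((k : ℂ) - s) / 2) =
      Complex.cos ((Real.pi : ℂ) * s / 2) := by
    have h : (Real.pi : ℂ) * ((k : ℂ) - s) / 2 =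
        ((m : ℤ) : ℂ) * (2 * (Real.pi : ℂ)) - (Real.pi : ℂ) * s / 2 := by
      push_cast [hm]; ring
    rw [h, Complex.cos_int_mul_two_pi_sub]
  have hne : (2 * Real.pi : ℂ) ≠ 0 := by
    simp [Real.pi_ne_zero]
  have hpow : (2 * Real.pi : ℂ) ^ (-s) * (2 * Real.pi : ℂ) ^ (-((k : ℂ) - s)) =
      (2 * Real.pi : ℂ) ^ (-(k : ℂ)) := by
    rw [← Complex.cpow_add _ _ hne]
    congr 1
    ring
  rw [hcos]
  linear_combination (2 * Complex.cos ((Real.pi : ℂ) * s / 2) * Complex.Gamma s *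
    Complex.Gamma ((k : ℂ) - s) * riemannZeta s * riemannZeta ((k : ℂ) - s)) * hpow
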